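/- Let U ⊂ ℝ² be a bounded domain, B₁ ⊂⊂ B₂ ⊂⊂ U open balls, and ψ ∈ C(Ū) with inf_{B₁} ψ > sup_{U∖B₂} ψ. Let f₀ ∈ L¹(U) be nonnegative with ℒ({x ∈ U : f₀(x) > 0}) ≤ ℒ(B₁), and let ℛ be the set of measurable functions on U having the same distribution function as f₀. If u ∈ ℛ satisfies ∫_U u ψ dx ≥ ∫_U w ψ dx for all w ∈ ℛ, then the essential support of u is contained in the closure of B₂. -/

import Mathlib

set_option maxHeartbeats 1000000

open MeasureTheory Metric

/-- Support-localization lemma: a maximizer of the linear functional `w ↦ ∫ w ψ`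
over the rearrangement class of a concentrated nonnegative `f₀` is essentially
supported in the closure of `B₂`. -/
theorem stmt_1 (U : Set (EuclideanSpace ℝ (Fin 2)))
    (hUopen : IsOpen U) (hUconn : IsConnected U) (hUbdd : Bornology.IsBounded U)
    (c₁ c₂ : EuclideanSpace ℝ (Fin 2)) (r₁ r₂ : ℝ) (hr₁ : 0 < r₁) (hr₂ : 0 < r₂)
    (h12 : closure (ball c₁ r₁) ⊆ ball c₂ r₂) (h2U : closure (ball c₂ r₂) ⊆ U)
    (ψ : EuclideanSpace ℝ (Fin 2) → ℝ) (hψ : ContinuousOn ψ (closure U))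
    (hsep : sSup (ψ '' (U \ ball c₂ r₂)) < sInf (ψ '' ball c₁ r₁))
    (f₀ : EuclideanSpace ℝ (Fin 2) → ℝ)
    (hf₀int : IntegrableOn f₀ U)
    (hf₀nn : ∀ᵐ x ∂(volume.restrict U), 0 ≤ f₀ x)
    (hf₀small : volume {x ∈ U | 0 < f₀ x} ≤ volume (ball c₁ r₁))
    (u : EuclideanSpace ℝ (Fin 2) → ℝ) (huint : IntegrableOn u U)
    (hu_rearr : ∀ s : ℝ, volume {x ∈ U | s < u x} = volume {x ∈ U | s < f₀ x})
    (hmax : ∀ w : EuclideanSpace ℝ (Fin 2) → ℝ, IntegrableOn w U →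
      (∀ s : ℝ, volume {x ∈ U | s < w x} = volume {x ∈ U | s < f₀ x}) →
      ∫ x in U, w x * ψ x ≤ ∫ x in U, u x * ψ x) :
    ∀ᵐ x ∂(volume.restrict U), x ∉ closure (ball c₂ r₂) → u x = 0 := by
  classical
  have hUmeas : MeasurableSet U := hUopen.measurableSet
  have hUfin : volume U < ⊤ := hUbdd.measure_lt_top
  -- measurable representative of u
  obtain ⟨u', hu'sm, huu'⟩ : ∃ u' : EuclideanSpace ℝ (Fin 2) → ℝ, StronglyMeasurable u' ∧ u =ᶠ[ae (volume.restrict U)] u' :=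
    ⟨huint.1.mk u, huint.1.stronglyMeasurable_mk, huint.1.ae_eq_mk⟩
  have hu'meas : Measurable u' := hu'sm.measurable
  have hu'int : IntegrableOn u' U := huint.congr huu'
  -- helper : restrict-measure of sets via sep notation
  have resEq : ∀ P : EuclideanSpace ℝ (Fin 2) → Prop,
      volume.restrict U {x | P x} = volume {x ∈ U | P x} := by
    intro P
    rw [Measure.restrict_apply' hUmeas]
    congr 1
    ext x
    exact and_comm
  -- distribution functions agree for a.e.-equal functions
  have key : ∀ g g' : EuclideanSpace ℝ (Fin 2) → ℝ, g =ᶠ[ae (volume.restrict U)] g' →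
      ∀ s : ℝ, volume {x ∈ U | s < g x} = volume {x ∈ U | s < g' x} := by
    intro g g' h s
    have h1 : {x | s < g x} =ᶠ[ae (volume.restrict U)] {x | s < g' x} := by
      rw [Filter.eventuallyEq_set]
      filter_upwards [h] with x hx
      simp [hx]
    have h2 := measure_congr h1
    rw [resEq fun x => s < g x, resEq fun x => s < g' x] at h2
    exact h2
  have hu'rearr : ∀ s : ℝ, volume {x ∈ U | s < u' x} = volume {x ∈ U | s < f₀ x} := by
    intro s
    rw [← key u u' huu' s]
    exact hu_rearr s
  -- u' is a.e. nonnegative on U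
  have hu'nn : ∀ᵐ x ∂(volume.restrict U), 0 ≤ u' x := by
    have hs : ∀ n : ℕ, ∀ᵐ x ∂(volume.restrict U), ¬ (u' x ≤ -(1/(n+1))) := by
      intro n
      set s : ℝ := -(1/(n+1 : ℝ)) with hsdef
      have hsneg : s < 0 := by
        rw [hsdef]
        simp only [neg_neg, Left.neg_neg_iff]
        positivity
      have hf : volume {x ∈ U | s < f₀ x} = volume U := by
        refine le_antisymm (measure_mono fun x hx => hx.1) ?_
        have hnull : volume {x ∈ U | ¬ s < f₀ x} = 0 := by
          rw [← resEq fun x => ¬ s < f₀ x]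
          have hae : ∀ᵐ x ∂(volume.restrict U), s < f₀ x :=
            hf₀nn.mono fun x hx => lt_of_lt_of_le hsneg hx
          rw [ae_iff] at hae
          exact hae
        calc volume U ≤ volume ({x ∈ U | s < f₀ x} ∪ {x ∈ U | ¬ s < f₀ x}) := by
              refine measure_mono fun x hx => ?_
              by_cases h : s < f₀ x
              · exact Or.inl ⟨hx, h⟩
              · exact Or.inr ⟨hx, h⟩
          _ ≤ volume {x ∈ U | s < f₀ x} + volume {x ∈ U | ¬ s < f₀ x} := measure_union_le _ _
          _ = volume {x ∈ U | s < f₀ x} := by rw [hnull, add_zero]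
      have hu : volume ({x | s < u' x} ∩ U) = volume U := by
        have : {x | s < u' x} ∩ U = {x ∈ U | s < u' x} := by ext x; exact and_comm
        rw [this, hu'rearr s, hf]
      have hdiff : volume (U \ ({x | s < u' x} ∩ U)) = 0 := by
        rw [measure_diff Set.inter_subset_right
          (((measurableSet_lt measurable_const hu'meas).inter hUmeas).nullMeasurableSet)
          (by rw [hu]; exact hUfin.ne), hu, tsub_self]
      have hres : volume.restrict U {x | u' x ≤ s} = 0 := by
        rw [Measure.restrict_apply' hUmeas]
        refine measure_mono_null ?_ hdiff
        intro x hx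
        exact ⟨hx.2, fun hmem => absurd (show s < u' x from hmem.1) (not_lt.mpr hx.1)⟩
      have := measure_eq_zero_iff_ae_notMem.mp hres
      filter_upwards [this] with x hx
      exact hx
    have hall : ∀ᵐ x ∂(volume.restrict U), ∀ n : ℕ, ¬ (u' x ≤ -(1/(n+1))) := ae_all_iff.mpr hs
    filter_upwards [hall] with x hx
    by_contra h
    push_neg at h
    obtain ⟨n, hn⟩ := exists_nat_one_div_lt (neg_pos.mpr h)
    exact hx n (by linarith)
  -- the "positivity set" of u'
  set T : Set (EuclideanSpace ℝ (Fin 2)) := {x | 0 < u' x} ∩ U with hT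
  have hTmeas : MeasurableSet T := (measurableSet_lt measurable_const hu'meas).inter hUmeas
  have hTU : T ⊆ U := Set.inter_subset_right
  have hTvol : volume T ≤ volume (ball c₁ r₁) := by
    have h1 : volume T = volume {x ∈ U | 0 < u' x} := by
      congr 1; ext x; exact and_comm
    rw [h1, hu'rearr 0]
    exact hf₀small
  by_contra hcon
  -- the set A where u' is positive outside the closure of B₂ has positive measure
  set A : Set (EuclideanSpace ℝ (Fin 2)) := T \ closure (ball c₂ r₂) with hA
  have hAmeas : MeasurableSet A := hTmeas.diff isClosed_closure.measurableSet
  have hApos : volume A ≠ 0 := by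
    intro h0
    apply hcon
    have hAnull : volume.restrict U A = 0 := by
      rw [Measure.restrict_apply' hUmeas]
      exact measure_mono_null Set.inter_subset_left h0
    filter_upwards [huu', hu'nn, measure_eq_zero_iff_ae_notMem.mp hAnull,
      ae_restrict_mem hUmeas] with x h1 h2 h3 h4 hnot
    by_contra hne
    apply h3
    have hne' : u' x ≠ 0 := h1 ▸ hne
    exact ⟨⟨lt_of_le_of_ne h2 (Ne.symm hne'), h4⟩, hnot⟩
  -- the set Z in B₁ where u' is nonpositive has positive measure
  set Z : Set (EuclideanSpace ℝ (Fin 2)) := ball c₁ r₁ \ T with hZ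
  have hZmeas : MeasurableSet Z := measurableSet_ball.diff hTmeas
  have hZU : Z ⊆ U := fun x hx =>
    h2U (subset_closure (h12 (subset_closure hx.1)))
  have hZpos : volume Z ≠ 0 := by
    have hdisj : Disjoint (ball c₁ r₁ ∩ T) A := by
      rw [Set.disjoint_left]
      intro x hx hxA
      exact hxA.2 (subset_closure (h12 (subset_closure hx.1)))
    have hineq : volume (ball c₁ r₁ ∩ T) + volume A
        ≤ volume (ball c₁ r₁ ∩ T) + volume Z := by
      calc volume (ball c₁ r₁ ∩ T) + volume A
          = volume ((ball c₁ r₁ ∩ T) ∪ A) := (measure_union hdisj hAmeas).symm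
        _ ≤ volume T := measure_mono (Set.union_subset Set.inter_subset_right Set.diff_subset)
        _ ≤ volume (ball c₁ r₁) := hTvol
        _ = volume (ball c₁ r₁ ∩ T) + volume (ball c₁ r₁ \ T) :=
            (measure_inter_add_diff _ hTmeas).symm
    have hfin : volume (ball c₁ r₁ ∩ T) ≠ ⊤ :=
      ((measure_mono Set.inter_subset_left).trans_lt measure_ball_lt_top).ne
    have hle : volume A ≤ volume Z :=
      (ENNReal.add_le_add_iff_left hfin).mp hineq
    intro h0
    exact hApos (le_antisymm (h0 ▸ hle) zero_le)
  -- density points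
  obtain ⟨a₀, z₀, r, hr, hda, hdz⟩ :
      ∃ (a₀ z₀ : EuclideanSpace ℝ (Fin 2)) (r : ℝ), 0 < r ∧
        3/4 * volume (closedBall a₀ r) < volume (A ∩ closedBall a₀ r) ∧
        3/4 * volume (closedBall z₀ r) < volume (Z ∩ closedBall z₀ r) := by
    have hrA : (volume : Measure (EuclideanSpace ℝ (Fin 2))).restrict A ≠ 0 := by
      rw [Ne, Measure.restrict_eq_zero]
      exact hApos
    have hrZ : (volume : Measure (EuclideanSpace ℝ (Fin 2))).restrict Z ≠ 0 := by
      rw [Ne, Measure.restrict_eq_zero]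
      exact hZpos
    have hda' := Besicovitch.ae_tendsto_measure_inter_div (volume : Measure (EuclideanSpace ℝ (Fin 2))) A
    have hdz' := Besicovitch.ae_tendsto_measure_inter_div (volume : Measure (EuclideanSpace ℝ (Fin 2))) Z
    obtain ⟨a₀, ha₀⟩ := by
      haveI := ae_neBot.mpr hrA
      exact hda'.exists
    obtain ⟨z₀, hz₀⟩ := by
      haveI := ae_neBot.mpr hrZ
      exact hdz'.exists
    have h34 : (3/4 : ENNReal) < 1 := by
      rw [ENNReal.div_lt_iff (Or.inl (by norm_num)) (Or.inl (by norm_num))]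
      norm_num
    have e1 := ha₀.eventually (lt_mem_nhds h34)
    have e2 := hz₀.eventually (lt_mem_nhds h34)
    obtain ⟨r, hr1, hr2, hrpos⟩ := (e1.and (e2.and self_mem_nhdsWithin)).exists
    refine ⟨a₀, z₀, r, hrpos, ?_, ?_⟩
    · exact (ENNReal.lt_div_iff_mul_lt
        (Or.inl (measure_closedBall_pos volume a₀ hrpos).ne')
        (Or.inl measure_closedBall_lt_top.ne)).mp hr1
    · exact (ENNReal.lt_div_iff_mul_lt
        (Or.inl (measure_closedBall_pos volume z₀ hrpos).ne')
        (Or.inl measure_closedBall_lt_top.ne)).mp hr2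
  -- translation setup
  set v : EuclideanSpace ℝ (Fin 2) := z₀ - a₀ with hv
  have hz₀v : a₀ + v = z₀ := by rw [hv]; abel
  have hpre : ∀ (c : EuclideanSpace ℝ (Fin 2)) (ρ : ℝ),
      (fun x => x + v) ⁻¹' closedBall (c + v) ρ = closedBall c ρ := by
    intro c ρ
    ext x
    simp [mem_closedBall, dist_add_right]
  have hmpv : MeasurePreserving (fun x : EuclideanSpace ℝ (Fin 2) => x + v) volume volume :=
    measurePreserving_add_right volume v
  have hembv : MeasurableEmbedding (fun x : EuclideanSpace ℝ (Fin 2) => x + v) :=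
    (MeasurableEquiv.addRight v).measurableEmbedding
  -- the swap sets
  set Y : Set (EuclideanSpace ℝ (Fin 2)) := (fun x => x + v) ⁻¹' (Z ∩ closedBall z₀ r) with hY
  have hYmeas : MeasurableSet Y :=
    (hZmeas.inter measurableSet_closedBall).preimage (measurable_id.add measurable_const)
  have hYvol : volume Y = volume (Z ∩ closedBall z₀ r) :=
    measure_preimage_add_right volume v _
  have hYsub : Y ⊆ closedBall a₀ r := by
    intro x hx
    have : x ∈ (fun x => x + v) ⁻¹' closedBall (a₀ + v) r := by
      rw [hz₀v]; exact hx.2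
    rwa [hpre] at this
  set E : Set (EuclideanSpace ℝ (Fin 2)) := (A ∩ closedBall a₀ r) ∩ Y with hE
  have hEmeas : MeasurableSet E := (hAmeas.inter measurableSet_closedBall).inter hYmeas
  have hEpos : volume E ≠ 0 := by
    intro h0
    have hb0 : volume (closedBall a₀ r) ≠ 0 := (measure_closedBall_pos volume a₀ hr).ne'
    have hbt : volume (closedBall a₀ r) ≠ ⊤ := measure_closedBall_lt_top.ne
    have h1 : volume (A ∩ closedBall a₀ r) ≤ volume (closedBall a₀ r \ Y) := by
      have hsub : A ∩ closedBall a₀ r ⊆ E ∪ (closedBall a₀ r \ Y) := by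
        intro x hx
        by_cases hxY : x ∈ Y
        · exact Or.inl ⟨hx, hxY⟩
        · exact Or.inr ⟨hx.2, hxY⟩
      calc volume (A ∩ closedBall a₀ r) ≤ volume E + volume (closedBall a₀ r \ Y) :=
            le_trans (measure_mono hsub) (measure_union_le _ _)
        _ = volume (closedBall a₀ r \ Y) := by rw [h0, zero_add]
    have h2 : volume Y + volume (closedBall a₀ r \ Y) = volume (closedBall a₀ r) := by
      have h2' : volume (closedBall a₀ r ∩ Y) + volume (closedBall a₀ r \ Y)
          = volume (closedBall a₀ r) := measure_inter_add_diff _ hYmeas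
      rwa [Set.inter_eq_self_of_subset_right hYsub] at h2'
    have h3 : volume (A ∩ closedBall a₀ r) + volume Y ≤ volume (closedBall a₀ r) := by
      rw [← h2, add_comm (volume Y)]
      exact add_le_add h1 le_rfl
    have hcbeq : volume (closedBall z₀ r) = volume (closedBall a₀ r) := by
      have := measure_preimage_add_right volume v (closedBall (a₀ + v) r)
      rw [hpre] at this
      rw [hz₀v] at this
      exact this.symm
    have hdzY : 3/4 * volume (closedBall a₀ r) < volume Y := by
      rw [hYvol, ← hcbeq]
      exact hdz
    have h4 : 3/4 * volume (closedBall a₀ r) + 3/4 * volume (closedBall a₀ r)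
        < volume (A ∩ closedBall a₀ r) + volume Y := ENNReal.add_lt_add hda hdzY
    have h5 : volume (closedBall a₀ r) ≤ 3/4 * volume (closedBall a₀ r) + 3/4 * volume (closedBall a₀ r) := by
      rw [← add_mul]
      have h14 : (1 : ENNReal) ≤ 3/4 + 3/4 := by
        rw [← ENNReal.add_div]
        rw [ENNReal.le_div_iff_mul_le (Or.inl (by norm_num)) (Or.inl (by norm_num))]
        norm_num
      calc volume (closedBall a₀ r) = 1 * volume (closedBall a₀ r) := (one_mul _).symm
        _ ≤ (3/4 + 3/4) * volume (closedBall a₀ r) := mul_le_mul_left h14 _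
    exact (lt_of_lt_of_le h4 h3).not_ge h5
  -- the mirrored set E'
  set E' : Set (EuclideanSpace ℝ (Fin 2)) := (fun x => x - v) ⁻¹' E with hE'
  have hE'meas : MeasurableSet E' := hEmeas.preimage (measurable_id.sub measurable_const)
  have hiffE' : ∀ x, x + v ∈ E' ↔ x ∈ E := by
    intro x
    rw [hE', Set.mem_preimage, add_sub_cancel_right]
  have hiffE : ∀ x, x - v ∈ E ↔ x ∈ E' := fun x => Iff.rfl
  have hE'Z : E' ⊆ Z ∩ closedBall z₀ r := by
    intro x hx
    have h1 : (x - v) + v ∈ Z ∩ closedBall z₀ r := (hx : x - v ∈ E).2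
    rwa [sub_add_cancel] at h1
  have hEA : E ⊆ A ∩ closedBall a₀ r := Set.inter_subset_left
  have hEU : E ⊆ U := fun x hx => ((hEA hx).1.1).2
  have hE'U : E' ⊆ U := fun x hx => hZU (hE'Z hx).1
  have hmemE' : ∀ x ∈ E, x + v ∈ E' := fun x hx => (hiffE' x).mpr hx
  have hdisjEE' : Disjoint E E' := by
    rw [Set.disjoint_left]
    intro x hxE hxE'
    exact (hEA hxE).1.2 (subset_closure (h12 (subset_closure (hE'Z hxE').1.1)))
  -- the swap map
  set φ : EuclideanSpace ℝ (Fin 2) → EuclideanSpace ℝ (Fin 2) :=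
    E.piecewise (fun x => x + v) (E'.piecewise (fun x => x - v) id) with hφ
  have hφmeas : Measurable φ :=
    Measurable.piecewise hEmeas (measurable_id.add measurable_const)
      (Measurable.piecewise hE'meas (measurable_id.sub measurable_const) measurable_id)
  have hφ1 : ∀ x ∈ E, φ x = x + v := fun x hx => Set.piecewise_eq_of_mem _ _ _ hx
  have hφ2 : ∀ x ∈ E', φ x = x - v := by
    intro x hx
    rw [hφ, Set.piecewise_eq_of_notMem _ _ _ (Set.disjoint_right.mp hdisjEE' hx),
      Set.piecewise_eq_of_mem _ _ _ hx]
  have hφ3 : ∀ x, x ∉ E → x ∉ E' → φ x = x := by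
    intro x hx hx'
    rw [hφ, Set.piecewise_eq_of_notMem _ _ _ hx, Set.piecewise_eq_of_notMem _ _ _ hx']
    rfl
  have hφU : φ ⁻¹' U = U := by
    ext x
    simp only [Set.mem_preimage]
    by_cases hxE : x ∈ E
    · rw [hφ1 x hxE]
      exact iff_of_true (hE'U (hmemE' x hxE)) (hEU hxE)
    · by_cases hxE' : x ∈ E'
      · rw [hφ2 x hxE']
        exact iff_of_true (hEU ((hiffE x).mpr hxE')) (hE'U hxE')
      · rw [hφ3 x hxE hxE']
  -- φ is measure preserving
  have hφmp : MeasurePreserving φ volume volume := by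
    refine ⟨hφmeas, ?_⟩
    refine Measure.ext fun S hS => ?_
    rw [Measure.map_apply hφmeas hS]
    have hdecomp : φ ⁻¹' S =
        ((fun x => x + v) ⁻¹' S ∩ E) ∪ (((fun x => x - v) ⁻¹' S ∩ E') ∪ (S ∩ (E ∪ E')ᶜ)) := by
      ext x
      by_cases hxE : x ∈ E
      · simp [Set.mem_preimage, hφ1 x hxE, hxE, Set.disjoint_left.mp hdisjEE' hxE]
      · by_cases hxE' : x ∈ E'
        · simp [Set.mem_preimage, hφ2 x hxE', hxE, hxE']
        · simp [Set.mem_preimage, hφ3 x hxE hxE', hxE, hxE']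
    rw [hdecomp]
    have hd1 : Disjoint ((fun x => x + v) ⁻¹' S ∩ E)
        (((fun x => x - v) ⁻¹' S ∩ E') ∪ (S ∩ (E ∪ E')ᶜ)) := by
      rw [Set.disjoint_left]
      rintro x ⟨-, hxE⟩ (⟨-, hxE'⟩ | ⟨-, hxc⟩)
      · exact Set.disjoint_left.mp hdisjEE' hxE hxE'
      · exact hxc (Or.inl hxE)
    have hd2 : Disjoint ((fun x => x - v) ⁻¹' S ∩ E') (S ∩ (E ∪ E')ᶜ) := by
      rw [Set.disjoint_left]
      rintro x ⟨-, hxE'⟩ ⟨-, hxc⟩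
      exact hxc (Or.inr hxE')
    rw [measure_union hd1 (((hS.preimage (measurable_id.sub measurable_const)).inter hE'meas).union
      (hS.inter (hEmeas.union hE'meas).compl))]
    rw [measure_union hd2 (hS.inter (hEmeas.union hE'meas).compl)]
    have ha : (fun x => x + v) ⁻¹' S ∩ E = (fun x => x + v) ⁻¹' (S ∩ E') := by
      ext x
      simp only [Set.mem_preimage, Set.mem_inter_iff]
      rw [hiffE' x]
    have hb : (fun x => x - v) ⁻¹' S ∩ E' = (fun x => x - v) ⁻¹' (S ∩ E) := by
      rw [hE', ← Set.preimage_inter]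
    have hb' : volume ((fun x => x - v) ⁻¹' (S ∩ E)) = volume (S ∩ E) := by
      simp only [sub_eq_add_neg]
      exact measure_preimage_add_right volume (-v) _
    rw [ha, measure_preimage_add_right, hb, hb']
    have hc : volume (S ∩ (E ∪ E')) = volume (S ∩ E) + volume (S ∩ E') := by
      rw [Set.inter_union_distrib_left]
      exact measure_union (hdisjEE'.mono Set.inter_subset_right Set.inter_subset_right)
        (hS.inter hE'meas)
    have hd : volume (S ∩ (E ∪ E')) + volume (S ∩ (E ∪ E')ᶜ) = volume S := by
      have hd' : volume (S ∩ (E ∪ E')) + volume (S \ (E ∪ E')) = volume S :=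
        measure_inter_add_diff _ (hEmeas.union hE'meas)
      rwa [Set.diff_eq] at hd'
    rw [← hd, hc]
    ring
  have hφUres : MeasurePreserving φ (volume.restrict U) (volume.restrict U) := by
    have h := hφmp.restrict_preimage hUmeas
    rwa [hφU] at h
  have hwint : IntegrableOn (fun x => u' (φ x)) U := by
    have h := (hφUres.integrable_comp hu'sm.aestronglyMeasurable).mpr hu'int
    exact h
  have hwdist : ∀ s : ℝ, volume {x ∈ U | s < u' (φ x)} = volume {x ∈ U | s < f₀ x} := by
    intro s
    rw [← resEq fun x => s < u' (φ x)]
    have h2 : {x | s < u' (φ x)} = φ ⁻¹' {y | s < u' y} := rfl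
    rw [h2, ← Measure.map_apply hφmeas (measurableSet_lt measurable_const hu'meas),
      hφUres.map_eq, resEq fun x => s < u' x, hu'rearr s]
  -- boundedness of ψ
  have hUc : IsCompact (closure U) := hUbdd.isCompact_closure
  obtain ⟨C, hC⟩ := hUc.exists_bound_of_continuousOn hψ
  have hCU : ∀ x ∈ U, ‖ψ x‖ ≤ C := fun x hx => hC x (subset_closure hx)
  have hψU : ContinuousOn ψ U := hψ.mono subset_closure
  have hKco : IsCompact (ψ '' closure U) := hUc.image_of_continuousOn hψ
  have hball1U : ball c₁ r₁ ⊆ U := fun x hx => h2U (subset_closure (h12 (subset_closure hx)))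
  have hbddA : BddAbove (ψ '' (U \ ball c₂ r₂)) :=
    BddAbove.mono (Set.image_mono fun x hx => subset_closure hx.1) hKco.bddAbove
  have hbddB : BddBelow (ψ '' ball c₁ r₁) :=
    BddBelow.mono (Set.image_mono fun x hx => subset_closure (hball1U hx)) hKco.bddBelow
  set δ : ℝ := sInf (ψ '' ball c₁ r₁) - sSup (ψ '' (U \ ball c₂ r₂)) with hδ
  have hδpos : 0 < δ := sub_pos.mpr hsep
  -- integrability facts
  have hψbdU : ∀ᵐ x ∂(volume.restrict U), ‖ψ x‖ ≤ C :=
    (ae_restrict_mem hUmeas).mono fun x hx => hCU x hx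
  have hψaesmU : AEStronglyMeasurable ψ (volume.restrict U) :=
    hψU.aestronglyMeasurable hUmeas
  have hu'ψint : IntegrableOn (fun x => u' x * ψ x) U :=
    (Integrable.bdd_mul hu'int hψaesmU hψbdU).congr (Filter.Eventually.of_forall fun x => mul_comm _ _)
  have hwψint : IntegrableOn (fun x => u' (φ x) * ψ x) U :=
    (Integrable.bdd_mul hwint hψaesmU hψbdU).congr (Filter.Eventually.of_forall fun x => mul_comm _ _)
  have hEpre2 : E = (fun x => x + v) ⁻¹' E' := by
    ext x
    rw [Set.mem_preimage]
    exact (hiffE' x).symm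
  have hg₁int : IntegrableOn (fun x => u' (x + v)) E := by
    have h := hmpv.restrict_preimage hE'meas
    rw [← hEpre2] at h
    have h2 := (h.integrable_comp hu'sm.aestronglyMeasurable).mpr (hu'int.mono_set hE'U)
    exact h2
  have hψ₁cont : ContinuousOn (fun x => ψ (x + v)) E :=
    hψU.comp ((continuous_id.add continuous_const).continuousOn) fun x hx => hE'U (hmemE' x hx)
  have hψ₁aesm : AEStronglyMeasurable (fun x => ψ (x + v)) (volume.restrict E) :=
    hψ₁cont.aestronglyMeasurable hEmeas
  have hψ₁bd : ∀ᵐ x ∂(volume.restrict E), ‖ψ (x + v)‖ ≤ C :=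
    (ae_restrict_mem hEmeas).mono fun x hx => hCU _ (hE'U (hmemE' x hx))
  have hψaesmE : AEStronglyMeasurable ψ (volume.restrict E) :=
    (hψU.mono hEU).aestronglyMeasurable hEmeas
  have hψbdE : ∀ᵐ x ∂(volume.restrict E), ‖ψ x‖ ≤ C :=
    (ae_restrict_mem hEmeas).mono fun x hx => hCU _ (hEU hx)
  have I1 : IntegrableOn (fun x => u' (x + v) * ψ x) E :=
    (Integrable.bdd_mul hg₁int hψaesmE hψbdE).congr (Filter.Eventually.of_forall fun x => mul_comm _ _)
  have I2 : IntegrableOn (fun x => u' x * ψ x) E := hu'ψint.mono_set hEU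
  have I3 : IntegrableOn (fun x => u' x * ψ (x + v)) E :=
    (Integrable.bdd_mul (hu'int.mono_set hEU) hψ₁aesm hψ₁bd).congr
      (Filter.Eventually.of_forall fun x => mul_comm _ _)
  have I4 : IntegrableOn (fun x => u' (x + v) * ψ (x + v)) E :=
    (Integrable.bdd_mul hg₁int hψ₁aesm hψ₁bd).congr (Filter.Eventually.of_forall fun x => mul_comm _ _)
  -- splitting U into E, E', and the rest
  have hEE'U : E ∪ E' ⊆ U := Set.union_subset hEU hE'U
  have hsplit : ∀ f : EuclideanSpace ℝ (Fin 2) → ℝ, IntegrableOn f U →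
      ∫ x in U, f x = ((∫ x in E, f x) + ∫ x in E', f x) + ∫ x in U \ (E ∪ E'), f x := by
    intro f hf
    have h1 : ∫ x in (E ∪ E') ∪ (U \ (E ∪ E')), f x
        = (∫ x in E ∪ E', f x) + ∫ x in U \ (E ∪ E'), f x :=
      setIntegral_union disjoint_sdiff_self_right (hUmeas.diff (hEmeas.union hE'meas))
        (hf.mono_set hEE'U) (hf.mono_set Set.diff_subset)
    rw [Set.union_diff_cancel hEE'U] at h1
    rw [h1, setIntegral_union hdisjEE' hE'meas (hf.mono_set hEU) (hf.mono_set hE'U)]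
  -- identify the integrand on each piece
  have ew1 : ∫ x in E, u' (φ x) * ψ x = ∫ x in E, u' (x + v) * ψ x :=
    setIntegral_congr_fun hEmeas fun x hx => by
      show u' (φ x) * ψ x = u' (x + v) * ψ x
      rw [hφ1 x hx]
  have ew2 : ∫ x in E', u' (φ x) * ψ x = ∫ x in E', u' (x - v) * ψ x :=
    setIntegral_congr_fun hE'meas fun x hx => by
      show u' (φ x) * ψ x = u' (x - v) * ψ x
      rw [hφ2 x hx]
  have ew3 : ∫ x in U \ (E ∪ E'), u' (φ x) * ψ x = ∫ x in U \ (E ∪ E'), u' x * ψ x :=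
    setIntegral_congr_fun (hUmeas.diff (hEmeas.union hE'meas)) fun x hx => by
      show u' (φ x) * ψ x = u' x * ψ x
      rw [hφ3 x (fun h => hx.2 (Or.inl h)) (fun h => hx.2 (Or.inr h))]
  -- translate the E' integrals back to E
  have ht1 : ∫ x in E', u' (x - v) * ψ x = ∫ x in E, u' x * ψ (x + v) := by
    have h := hmpv.setIntegral_preimage_emb hembv (fun y => u' (y - v) * ψ y) E'
    rw [← hEpre2] at h
    rw [← h]
    refine setIntegral_congr_fun hEmeas fun x hx => ?_
    show u' (x + v - v) * ψ (x + v) = u' x * ψ (x + v)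
    rw [add_sub_cancel_right]
  have ht2 : ∫ x in E', u' x * ψ x = ∫ x in E, u' (x + v) * ψ (x + v) := by
    have h := hmpv.setIntegral_preimage_emb hembv (fun y => u' y * ψ y) E'
    rw [← hEpre2] at h
    rw [← h]
  -- the difference of the two functionals
  have hDiff : (∫ x in U, u' (φ x) * ψ x) - ∫ x in U, u' x * ψ x
      = ∫ x in E, (u' (x + v) * ψ x + u' x * ψ (x + v)
          - (u' x * ψ x + u' (x + v) * ψ (x + v))) := by
    have J1 : Integrable (fun x => u' (x + v) * ψ x + u' x * ψ (x + v))
        (volume.restrict E) := I1.add I3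
    have J2 : Integrable (fun x => u' x * ψ x + u' (x + v) * ψ (x + v))
        (volume.restrict E) := I2.add I4
    have hkey4 : ∫ x in E, (u' (x + v) * ψ x + u' x * ψ (x + v)
          - (u' x * ψ x + u' (x + v) * ψ (x + v)))
        = ((∫ x in E, u' (x + v) * ψ x) + ∫ x in E, u' x * ψ (x + v))
          - ((∫ x in E, u' x * ψ x) + ∫ x in E, u' (x + v) * ψ (x + v)) := by
      refine (integral_sub J1 J2).trans ?_
      exact congrArg₂ Sub.sub (integral_add I1 I3) (integral_add I2 I4)
    rw [hsplit _ hwψint, hsplit _ hu'ψint, ew1, ew2, ew3, ht1, ht2, hkey4]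
    ring
  -- a.e. vanishing of u' ∘ (· + v) on E
  have hnull : volume ({y | u' y < 0} ∩ U) = 0 := by
    have h := ae_iff.mp hu'nn
    rw [Measure.restrict_apply' hUmeas] at h
    have hseteq : {y | u' y < 0} = {x | ¬ 0 ≤ u' x} := by
      ext y
      simp [not_le]
    rw [hseteq]
    exact h
  have hEzero : ∀ᵐ x ∂(volume.restrict E), u' (x + v) = 0 := by
    have hpreim : volume ((fun x => x + v) ⁻¹' ({y | u' y < 0} ∩ U)) = 0 := by
      rw [measure_preimage_add_right]
      exact hnull
    rw [ae_iff, Measure.restrict_apply' hEmeas]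
    refine measure_mono_null ?_ hpreim
    intro x hx
    have hxZ : x + v ∈ Z := (hE'Z (hmemE' x hx.2)).1
    have hxU : x + v ∈ U := hZU hxZ
    have hle : u' (x + v) ≤ 0 := by
      by_contra hpos
      push_neg at hpos
      exact hxZ.2 ⟨hpos, hxU⟩
    exact ⟨lt_of_le_of_ne hle hx.1, hxU⟩
  -- pointwise lower bound
  have hlow : ∀ᵐ x ∂(volume.restrict E),
      δ * u' x ≤ u' (x + v) * ψ x + u' x * ψ (x + v)
        - (u' x * ψ x + u' (x + v) * ψ (x + v)) := by
    filter_upwards [hEzero, ae_restrict_mem hEmeas] with x h0 hxE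
    have hx1 : 0 < u' x := (hEA hxE).1.1.1
    have hx2 : ψ x ≤ sSup (ψ '' (U \ ball c₂ r₂)) :=
      le_csSup hbddA ⟨x, ⟨hEU hxE, fun hb => (hEA hxE).1.2 (subset_closure hb)⟩, rfl⟩
    have hx3 : sInf (ψ '' ball c₁ r₁) ≤ ψ (x + v) :=
      csInf_le hbddB ⟨x + v, (hE'Z (hmemE' x hxE)).1.1, rfl⟩
    rw [h0]
    have hδle : δ ≤ ψ (x + v) - ψ x := by
      rw [hδ]
      linarith
    nlinarith [mul_le_mul_of_nonneg_left hδle hx1.le]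
  have hEint : IntegrableOn u' E := hu'int.mono_set hEU
  have hpos1 : 0 < ∫ x in E, u' x := by
    rw [setIntegral_pos_iff_support_of_nonneg_ae
      ((ae_restrict_mem hEmeas).mono fun x hx => ((hEA hx).1.1.1).le) hEint]
    refine lt_of_lt_of_le ?_
      (measure_mono fun x (hx : x ∈ E) => ⟨ne_of_gt (hEA hx).1.1.1, hx⟩)
    exact pos_iff_ne_zero.mpr hEpos
  have hDpos : 0 < ∫ x in E, (u' (x + v) * ψ x + u' x * ψ (x + v)
      - (u' x * ψ x + u' (x + v) * ψ (x + v))) := by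
    have h1 : ∫ x in E, δ * u' x ≤ ∫ x in E, (u' (x + v) * ψ x + u' x * ψ (x + v)
        - (u' x * ψ x + u' (x + v) * ψ (x + v))) :=
      integral_mono_ae (hEint.const_mul δ) ((I1.add I3).sub (I2.add I4)) hlow
    rw [integral_const_mul] at h1
    exact lt_of_lt_of_le (mul_pos hδpos hpos1) h1
  -- contradiction with maximality
  have hmaxap := hmax (fun x => u' (φ x)) hwint hwdist
  have huψeq : ∫ x in U, u x * ψ x = ∫ x in U, u' x * ψ x :=
    integral_congr_ae (huu'.mono fun x hx => show u x * ψ x = u' x * ψ x by rw [hx])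
  rw [huψeq] at hmaxap
  linarith
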